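/- Along every solution of the discrete error system, the error energy satisfies, for all t ≥ 0, (d/dt) e_h(t) = −k₁ (η¹_{N+1}(t))² − k₂ (η²_{N+1}(t))² + h Σ_{j=0}^{N} [ η²_{j+1/2} s²_{j+1/2} + η¹_{j+1/2} s¹_{j+1/2} + r¹_{j+1/2} (α θ¹_{j+1/2} − γβ θ²_{j+1/2}) + r²_{j+1/2} (β θ²_{j+1/2} − γβ θ¹_{j+1/2}) ]. -/

import Mathlib

/-!
Differentiating the energy along the scheme, the bulk terms pair each velocity with the
difference quotient of the corresponding stress `σ₁ = α θ¹ − γβ θ²`, `σ₂ = β θ² − γβ θ¹`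
(this is where `α₁ = α − γ²β` enters). The discrete product rule
`h (U_{j+1/2} δ_x V_{j+1/2} + V_{j+1/2} δ_x U_{j+1/2}) = U_{j+1} V_{j+1} − U_j V_j`
makes these terms telescope to the boundary values `σ₁ η¹ + σ₂ η²`, which vanish at `x = 0`
and equal `−k₁ (η¹_{N+1})² − k₂ (η²_{N+1})²` at `x = L` by the feedback conditions.
-/

noncomputable section

/-- Midpoint average `U_{j+1/2} = (U_j + U_{j+1})/2` of a grid function. -/
def gridMid (U : ℕ → ℝ) (j : ℕ) : ℝ := (U j + U (j + 1)) / 2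

/-- Difference quotient `δ_x U_{j+1/2} = (U_{j+1} − U_j)/h` of a grid function. -/
def gridDx (h : ℝ) (U : ℕ → ℝ) (j : ℕ) : ℝ := (U (j + 1) - U j) / h

/-- The discrete error energy `e_h`. -/
def errEnergy (ρ μ β γ α₁ h : ℝ) (N : ℕ) (θ1 θ2 η1 η2 : ℕ → ℝ) : ℝ :=
  h / 2 * ∑ j ∈ Finset.range (N + 1),
    (ρ * gridMid η1 j ^ 2 + μ * gridMid η2 j ^ 2
      + β * (γ * gridMid θ1 j - gridMid θ2 j) ^ 2 + α₁ * gridMid θ1 j ^ 2)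

open Finset

section GridCalculus

variable {h : ℝ} (U V : ℕ → ℝ)

theorem mul_gridMid_gridDx_add (hh : h ≠ 0) (j : ℕ) :
    h * (gridMid U j * gridDx h V j + gridMid V j * gridDx h U j)
      = U (j + 1) * V (j + 1) - U j * V j := by
  unfold gridMid gridDx
  field_simp
  ring

theorem mul_sum_gridMid_gridDx_add (hh : h ≠ 0) (n : ℕ) :
    h * ∑ j ∈ range n, (gridMid U j * gridDx h V j + gridMid V j * gridDx h U j)
      = U n * V n - U 0 * V 0 := by
  rw [mul_sum]
  simp_rw [mul_gridMid_gridDx_add U V hh]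
  exact sum_range_sub (fun j => U j * V j) n

end GridCalculus

theorem hasDerivAt_errEnergy {ρ μ β γ α₁ h : ℝ} {N : ℕ} {θ1 θ2 η1 η2 : ℝ → ℕ → ℝ}
    {θ1' θ2' η1' η2' : ℕ → ℝ} {t : ℝ}
    (hθ1 : ∀ j ≤ N, HasDerivAt (fun s => gridMid (θ1 s) j) (θ1' j) t)
    (hθ2 : ∀ j ≤ N, HasDerivAt (fun s => gridMid (θ2 s) j) (θ2' j) t)
    (hη1 : ∀ j ≤ N, HasDerivAt (fun s => gridMid (η1 s) j) (η1' j) t)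
    (hη2 : ∀ j ≤ N, HasDerivAt (fun s => gridMid (η2 s) j) (η2' j) t) :
    HasDerivAt (fun s => errEnergy ρ μ β γ α₁ h N (θ1 s) (θ2 s) (η1 s) (η2 s))
      (h * ∑ j ∈ range (N + 1),
        (ρ * gridMid (η1 t) j * η1' j + μ * gridMid (η2 t) j * η2' j
          + β * (γ * gridMid (θ1 t) j - gridMid (θ2 t) j) * (γ * θ1' j - θ2' j)
          + α₁ * gridMid (θ1 t) j * θ1' j)) t := by
  have hsum : HasDerivAt (fun s => errEnergy ρ μ β γ α₁ h N (θ1 s) (θ2 s) (η1 s) (η2 s))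
      (h / 2 * ∑ j ∈ range (N + 1),
        (ρ * (2 * gridMid (η1 t) j * η1' j) + μ * (2 * gridMid (η2 t) j * η2' j)
          + β * (2 * (γ * gridMid (θ1 t) j - gridMid (θ2 t) j) * (γ * θ1' j - θ2' j))
          + α₁ * (2 * gridMid (θ1 t) j * θ1' j))) t := by
    refine (HasDerivAt.fun_sum fun j hj => ?_).const_mul (h / 2)
    have hjN : j ≤ N := Nat.lt_succ_iff.mp (mem_range.mp hj)
    convert (((hη1 j hjN).pow 2).const_mul ρ).add (((hη2 j hjN).pow 2).const_mul μ)
      |>.add (((((hθ1 j hjN).const_mul γ).sub (hθ2 j hjN)).pow 2).const_mul β)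
      |>.add (((hθ1 j hjN).pow 2).const_mul α₁) using 1
    · rfl
    · norm_num
  convert hsum using 1
  rw [mul_sum, mul_sum]
  exact sum_congr rfl fun j _ => by ring

theorem energy_density_rate_eq {ρ μ α β γ α₁ h : ℝ} (hρ : ρ ≠ 0) (hμ : μ ≠ 0)
    (hα₁ : α₁ = α - γ ^ 2 * β) (θ1 θ2 η1 η2 : ℕ → ℝ) (r1 r2 s1 s2 : ℝ) (j : ℕ) :
    ρ * gridMid η1 j * ((α * gridDx h θ1 j - γ * β * gridDx h θ2 j + s1) / ρ)
        + μ * gridMid η2 j * ((β * gridDx h θ2 j - γ * β * gridDx h θ1 j + s2) / μ)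
        + β * (γ * gridMid θ1 j - gridMid θ2 j)
          * (γ * (gridDx h η1 j + r1) - (gridDx h η2 j + r2))
        + α₁ * gridMid θ1 j * (gridDx h η1 j + r1)
      = (gridMid η1 j * gridDx h (fun i => α * θ1 i - γ * β * θ2 i) j
          + gridMid (fun i => α * θ1 i - γ * β * θ2 i) j * gridDx h η1 j)
        + (gridMid η2 j * gridDx h (fun i => β * θ2 i - γ * β * θ1 i) j
          + gridMid (fun i => β * θ2 i - γ * β * θ1 i) j * gridDx h η2 j)
        + (gridMid η2 j * s2 + gridMid η1 j * s1
          + r1 * (α * gridMid θ1 j - γ * β * gridMid θ2 j)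
          + r2 * (β * gridMid θ2 j - γ * β * gridMid θ1 j)) := by
  simp only [gridMid, gridDx, hα₁]
  field_simp
  ring

theorem stmt_12_general (ρ μ α β γ α₁ k₁ k₂ : ℝ)
    (hρ : 0 < ρ) (hμ : 0 < μ)
    (hα₁def : α₁ = α - γ ^ 2 * β)
    (N : ℕ) (L h : ℝ) (hL : 0 < L) (hh : h = L / (N + 1))
    (θ1 θ2 η1 η2 : ℝ → ℕ → ℝ) (r1 r2 s1 s2 : ℝ → ℕ → ℝ)
    (hode1 : ∀ t ≥ (0 : ℝ), ∀ j ≤ N,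
      HasDerivAt (fun s => gridMid (θ1 s) j) (gridDx h (η1 t) j + r1 t j) t)
    (hode2 : ∀ t ≥ (0 : ℝ), ∀ j ≤ N,
      HasDerivAt (fun s => gridMid (θ2 s) j) (gridDx h (η2 t) j + r2 t j) t)
    (hode3 : ∀ t ≥ (0 : ℝ), ∀ j ≤ N,
      HasDerivAt (fun s => gridMid (η1 s) j)
        ((α * gridDx h (θ1 t) j - γ * β * gridDx h (θ2 t) j + s1 t j) / ρ) t)
    (hode4 : ∀ t ≥ (0 : ℝ), ∀ j ≤ N,
      HasDerivAt (fun s => gridMid (η2 s) j)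
        ((β * gridDx h (θ2 t) j - γ * β * gridDx h (θ1 t) j + s2 t j) / μ) t)
    (hbc0 : ∀ t ≥ (0 : ℝ), η1 t 0 = 0 ∧ η2 t 0 = 0)
    (hbcL1 : ∀ t ≥ (0 : ℝ),
      α * θ1 t (N + 1) - γ * β * θ2 t (N + 1) = -(k₁ * η1 t (N + 1)))
    (hbcL2 : ∀ t ≥ (0 : ℝ),
      β * θ2 t (N + 1) - γ * β * θ1 t (N + 1) = -(k₂ * η2 t (N + 1))) :
    ∀ t ≥ (0 : ℝ),
      HasDerivAt (fun s => errEnergy ρ μ β γ α₁ h N (θ1 s) (θ2 s) (η1 s) (η2 s))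
        (-(k₁ * (η1 t (N + 1)) ^ 2) - k₂ * (η2 t (N + 1)) ^ 2
          + h * ∑ j ∈ Finset.range (N + 1),
              (gridMid (η2 t) j * s2 t j + gridMid (η1 t) j * s1 t j
                + r1 t j * (α * gridMid (θ1 t) j - γ * β * gridMid (θ2 t) j)
                + r2 t j * (β * gridMid (θ2 t) j - γ * β * gridMid (θ1 t) j))) t := by
  intro t ht
  have hh0 : h ≠ 0 := by rw [hh]; positivity
  convert hasDerivAt_errEnergy (hode1 t ht) (hode2 t ht) (hode3 t ht) (hode4 t ht) using 1
  rw [sum_congr rfl fun j _ => energy_density_rate_eq hρ.ne' hμ.ne' hα₁def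
    (θ1 t) (θ2 t) (η1 t) (η2 t) (r1 t j) (r2 t j) (s1 t j) (s2 t j) j]
  obtain ⟨hη1₀, hη2₀⟩ := hbc0 t ht
  have hflux1 := mul_sum_gridMid_gridDx_add (η1 t)
    (fun i => α * θ1 t i - γ * β * θ2 t i) hh0 (N + 1)
  have hflux2 := mul_sum_gridMid_gridDx_add (η2 t)
    (fun i => β * θ2 t i - γ * β * θ1 t i) hh0 (N + 1)
  rw [hbcL1 t ht, hη1₀] at hflux1
  rw [hbcL2 t ht, hη2₀] at hflux2
  simp only [sum_add_distrib, mul_add] at hflux1 hflux2 ⊢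
  linear_combination -hflux1 - hflux2

/-- Along every solution of the discrete error system, the error energy
satisfies
`(d/dt)e_h(t) = −k₁(η¹_{N+1})² − k₂(η²_{N+1})² + h Σ_j [η²_{j+1/2}s²_{j+1/2} + η¹_{j+1/2}s¹_{j+1/2} + r¹_{j+1/2}(αθ¹_{j+1/2} − γβθ²_{j+1/2}) + r²_{j+1/2}(βθ²_{j+1/2} − γβθ¹_{j+1/2})]`. -/
theorem stmt_12 (ρ μ α β γ α₁ k₁ k₂ : ℝ)
    (hρ : 0 < ρ) (hμ : 0 < μ) (hα : 0 < α) (hβ : 0 < β) (hγ : 0 < γ)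
    (hk₁ : 0 < k₁) (hk₂ : 0 < k₂)
    (hα₁def : α₁ = α - γ ^ 2 * β) (hα₁ : 0 < α₁)
    (N : ℕ) (L h : ℝ) (hL : 0 < L) (hh : h = L / (N + 1))
    (θ1 θ2 η1 η2 : ℝ → ℕ → ℝ) (r1 r2 s1 s2 : ℝ → ℕ → ℝ)
    (hode1 : ∀ t ≥ (0 : ℝ), ∀ j ≤ N,
      HasDerivAt (fun s => gridMid (θ1 s) j) (gridDx h (η1 t) j + r1 t j) t)
    (hode2 : ∀ t ≥ (0 : ℝ), ∀ j ≤ N,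
      HasDerivAt (fun s => gridMid (θ2 s) j) (gridDx h (η2 t) j + r2 t j) t)
    (hode3 : ∀ t ≥ (0 : ℝ), ∀ j ≤ N,
      HasDerivAt (fun s => gridMid (η1 s) j)
        ((α * gridDx h (θ1 t) j - γ * β * gridDx h (θ2 t) j + s1 t j) / ρ) t)
    (hode4 : ∀ t ≥ (0 : ℝ), ∀ j ≤ N,
      HasDerivAt (fun s => gridMid (η2 s) j)
        ((β * gridDx h (θ2 t) j - γ * β * gridDx h (θ1 t) j + s2 t j) / μ) t)
    (hbc0 : ∀ t ≥ (0 : ℝ), η1 t 0 = 0 ∧ η2 t 0 = 0)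
    (hbcL1 : ∀ t ≥ (0 : ℝ),
      α * θ1 t (N + 1) - γ * β * θ2 t (N + 1) = -(k₁ * η1 t (N + 1)))
    (hbcL2 : ∀ t ≥ (0 : ℝ),
      β * θ2 t (N + 1) - γ * β * θ1 t (N + 1) = -(k₂ * η2 t (N + 1))) :
    ∀ t ≥ (0 : ℝ),
      HasDerivAt (fun s => errEnergy ρ μ β γ α₁ h N (θ1 s) (θ2 s) (η1 s) (η2 s))
        (-(k₁ * (η1 t (N + 1)) ^ 2) - k₂ * (η2 t (N + 1)) ^ 2
          + h * ∑ j ∈ Finset.range (N + 1),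
              (gridMid (η2 t) j * s2 t j + gridMid (η1 t) j * s1 t j
                + r1 t j * (α * gridMid (θ1 t) j - γ * β * gridMid (θ2 t) j)
                + r2 t j * (β * gridMid (θ2 t) j - γ * β * gridMid (θ1 t) j))) t :=
  stmt_12_general ρ μ α β γ α₁ k₁ k₂ hρ hμ hα₁def N L h hL hh θ1 θ2 η1 η2 r1 r2 s1 s2 hode1 hode2
    hode3 hode4 hbc0 hbcL1 hbcL2

end
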